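/- Let λ₁, …, λₙ < 0 be reals and P₁, …, Pₙ ∈ ℝ^{m×p} with S ∘ P_k ≠ 0 for all k in a nonempty set 𝒦 and S ∘ P_k = 0 for k ∉ 𝒦. Then the minimum of ‖Δ‖_F subject to max_{k∈𝒦} (λ_k + 𝟙ₘᵀ(P_k ∘ Δ)𝟙ₚ) = 0 and S^c ∘ Δ = 0 equals min_{k∈𝒦} (−λ_k / ‖S ∘ P_k‖_F). -/

import Mathlib

open Matrix BigOperators

noncomputable def frobNorm {m p : ℕ} (A : Matrix (Fin m) (Fin p) ℝ) : ℝ :=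
  Real.sqrt (∑ i, ∑ j, (A i j) ^ 2)

def onesVec (n : ℕ) : Fin n → ℝ := fun _ => 1

/-- 𝟙ₘᵀ A 𝟙ₚ : sum of all entries of A. -/
noncomputable def sumEntries {m p : ℕ} (A : Matrix (Fin m) (Fin p) ℝ) : ℝ :=
  onesVec m ⬝ᵥ (A *ᵥ onesVec p)

/-- S is a 0-1 (binary) matrix. -/
def IsBinary {m p : ℕ} (S : Matrix (Fin m) (Fin p) ℝ) : Prop :=
  ∀ i j, S i j = 0 ∨ S i j = 1

/-- complement Sᶜ = 𝟙_{m×p} − S of a binary matrix. -/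
def compl' {m p : ℕ} (S : Matrix (Fin m) (Fin p) ℝ) : Matrix (Fin m) (Fin p) ℝ :=
  Matrix.of fun i j => 1 - S i j
noncomputable def ip {m p : ℕ} (A B : Matrix (Fin m) (Fin p) ℝ) : ℝ :=
  ∑ i, ∑ j, A i j * B i j

lemma sumEntries_eq {m p : ℕ} (A : Matrix (Fin m) (Fin p) ℝ) :
    sumEntries A = ∑ i, ∑ j, A i j := by
  simp [sumEntries, onesVec, dotProduct, Matrix.mulVec]

lemma sumEntries_hadamard {m p : ℕ} (A B : Matrix (Fin m) (Fin p) ℝ) :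
    sumEntries (A.hadamard B) = ip A B := by
  simp [sumEntries_eq, ip, Matrix.hadamard]

lemma frobNorm_nonneg {m p : ℕ} (A : Matrix (Fin m) (Fin p) ℝ) : 0 ≤ frobNorm A :=
  Real.sqrt_nonneg _

lemma frobNorm_pos {m p : ℕ} {A : Matrix (Fin m) (Fin p) ℝ} (h : A ≠ 0) : 0 < frobNorm A := by
  have : ∃ i j, A i j ≠ 0 := by
    by_contra hc
    push_neg at hc
    exact h (by ext i j; simp [hc])
  obtain ⟨i, j, hij⟩ := this
  apply Real.sqrt_pos.2
  have h1 : 0 < ∑ j', (A i j') ^ 2 :=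
    Finset.sum_pos' (fun _ _ => sq_nonneg _) ⟨j, Finset.mem_univ _, by positivity⟩
  exact Finset.sum_pos' (fun _ _ => Finset.sum_nonneg fun _ _ => sq_nonneg _)
    ⟨i, Finset.mem_univ _, h1⟩

lemma ip_self {m p : ℕ} (A : Matrix (Fin m) (Fin p) ℝ) : ip A A = frobNorm A ^ 2 := by
  rw [frobNorm, Real.sq_sqrt (Finset.sum_nonneg fun i _ => Finset.sum_nonneg fun j _ => sq_nonneg (A i j))]
  simp [ip, sq]

lemma ip_le {m p : ℕ} (A B : Matrix (Fin m) (Fin p) ℝ) : ip A B ≤ frobNorm A * frobNorm B := by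
  have h := Real.sum_mul_le_sqrt_mul_sqrt (Finset.univ : Finset (Fin m × Fin p))
    (fun q => A q.1 q.2) (fun q => B q.1 q.2)
  rw [Fintype.sum_prod_type, Fintype.sum_prod_type, Fintype.sum_prod_type] at h
  exact h

lemma frobNorm_smul {m p : ℕ} (t : ℝ) (A : Matrix (Fin m) (Fin p) ℝ) :
    frobNorm (t • A) = |t| * frobNorm A := by
  have : ∑ i, ∑ j, ((t • A) i j) ^ 2 = t ^ 2 * ∑ i, ∑ j, (A i j) ^ 2 := by
    simp [Finset.mul_sum, mul_pow]
  rw [frobNorm, this, Real.sqrt_mul (sq_nonneg t), Real.sqrt_sq_eq_abs, frobNorm]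

/-- if Sᶜ∘Δ = 0 then ip A Δ = ip (S∘A) Δ -/
lemma ip_supported {m p : ℕ} {S Δ : Matrix (Fin m) (Fin p) ℝ} (hS : IsBinary S)
    (h : (compl' S).hadamard Δ = 0) (A : Matrix (Fin m) (Fin p) ℝ) :
    ip A Δ = ip (S.hadamard A) Δ := by
  apply Finset.sum_congr rfl
  intro i _
  apply Finset.sum_congr rfl
  intro j _
  have h0 : (1 - S i j) * Δ i j = 0 := by
    have := congrFun (congrFun h i) j
    simpa [Matrix.hadamard, compl'] using this
  rcases hS i j with hs | hs
  · simp only [hs] at h0 ⊢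
    simp only [one_mul, sub_zero] at h0
    simp [Matrix.hadamard, h0]
  · simp [Matrix.hadamard, hs]

lemma ip_smul {m p : ℕ} (A B : Matrix (Fin m) (Fin p) ℝ) (t : ℝ) :
    ip A (t • B) = t * ip A B := by
  simp [ip, Finset.mul_sum, mul_comm, mul_left_comm]


/-- Closed-form linearly approximated stability radius SR_la. -/
theorem sr_la_closed_form {n m p : ℕ} (lam : Fin n → ℝ) (Pm : Fin n → Matrix (Fin m) (Fin p) ℝ)
    (S : Matrix (Fin m) (Fin p) ℝ) (hS : IsBinary S)
    (K : Finset (Fin n)) (hK : K.Nonempty)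
    (hlam : ∀ k, lam k < 0)
    (hin : ∀ k ∈ K, S.hadamard (Pm k) ≠ 0)
    (hout : ∀ k ∉ K, S.hadamard (Pm k) = 0) :
    sInf {r : ℝ | ∃ Δ : Matrix (Fin m) (Fin p) ℝ, r = frobNorm Δ ∧
        K.sup' hK (fun k => lam k + sumEntries ((Pm k).hadamard Δ)) = 0 ∧
        (compl' S).hadamard Δ = 0}
      = K.inf' hK (fun k => -lam k / frobNorm (S.hadamard (Pm k))) := by
  set F : Fin n → ℝ := fun k => -lam k / frobNorm (S.hadamard (Pm k)) with hF
  obtain ⟨k₀, hk₀K, hk₀⟩ := Finset.exists_mem_eq_inf' hK F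
  set c := frobNorm (S.hadamard (Pm k₀)) with hc
  have hcpos : 0 < c := frobNorm_pos (hin k₀ hk₀K)
  set t : ℝ := -lam k₀ / c ^ 2 with ht
  have htpos : 0 < t := div_pos (by linarith [hlam k₀]) (by positivity)
  set Δ₀ := t • (S.hadamard (Pm k₀)) with hΔ₀
  have hsupp : (compl' S).hadamard Δ₀ = 0 := by
    ext i j
    rcases hS i j with hs | hs <;>
      simp [Matrix.hadamard, compl', hΔ₀, hs]
  have htc : t * c ^ 2 = -lam k₀ := by
    rw [ht, div_mul_cancel₀ _ (pow_ne_zero 2 hcpos.ne')]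
  have hfrob0 : frobNorm Δ₀ = F k₀ := by
    rw [hΔ₀, frobNorm_smul, abs_of_pos htpos, hF]
    show t * c = -lam k₀ / c
    rw [ht, sq, div_mul_eq_mul_div, mul_div_mul_right _ _ hcpos.ne']
  -- the value at each k ∈ K, for Δ supported on S
  have hval : ∀ (Δ : Matrix (Fin m) (Fin p) ℝ), (compl' S).hadamard Δ = 0 →
      ∀ k, sumEntries ((Pm k).hadamard Δ) = ip (S.hadamard (Pm k)) Δ := by
    intro Δ hΔ k
    rw [sumEntries_hadamard, ip_supported hS hΔ]
  -- Δ₀ is feasible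
  have hsup0 : K.sup' hK (fun k => lam k + sumEntries ((Pm k).hadamard Δ₀)) = 0 := by
    apply le_antisymm
    · apply Finset.sup'_le
      intro k hk
      rw [hval Δ₀ hsupp k, hΔ₀, ip_smul]
      have hFk : F k₀ ≤ F k := hk₀ ▸ Finset.inf'_le F hk
      have hfk : 0 < frobNorm (S.hadamard (Pm k)) := frobNorm_pos (hin k hk)
      have h1 : ip (S.hadamard (Pm k)) (S.hadamard (Pm k₀)) ≤ frobNorm (S.hadamard (Pm k)) * c :=
        ip_le _ _
      have h2 : t * ip (S.hadamard (Pm k)) (S.hadamard (Pm k₀)) ≤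
          t * (frobNorm (S.hadamard (Pm k)) * c) :=
        mul_le_mul_of_nonneg_left h1 htpos.le
      have hFk0 : F k₀ = -lam k₀ / c := by simp only [hF]; rfl
      have h3 : t * (frobNorm (S.hadamard (Pm k)) * c) = F k₀ * frobNorm (S.hadamard (Pm k)) := by
        rw [hFk0, ht]
        field_simp
      have h4 : F k₀ * frobNorm (S.hadamard (Pm k)) ≤ F k * frobNorm (S.hadamard (Pm k)) :=
        mul_le_mul_of_nonneg_right hFk hfk.le
      have h5 : F k * frobNorm (S.hadamard (Pm k)) = -lam k := by
        simp only [hF]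
        field_simp
      linarith
    · apply Finset.le_sup'_of_le _ hk₀K
      rw [hval Δ₀ hsupp k₀, hΔ₀, ip_smul, ip_self, ← hc, htc]
      linarith
  have hmem : F k₀ ∈ {r : ℝ | ∃ Δ : Matrix (Fin m) (Fin p) ℝ, r = frobNorm Δ ∧
      K.sup' hK (fun k => lam k + sumEntries ((Pm k).hadamard Δ)) = 0 ∧
      (compl' S).hadamard Δ = 0} := ⟨Δ₀, hfrob0.symm, hsup0, hsupp⟩
  apply le_antisymm
  · rw [hk₀]
    exact csInf_le ⟨0, fun r ⟨Δ, hr, _, _⟩ => hr ▸ frobNorm_nonneg Δ⟩ hmem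
  · apply le_csInf ⟨F k₀, hmem⟩
    rintro r ⟨Δ, rfl, hsup, hΔ⟩
    obtain ⟨k, hkK, hk⟩ := Finset.exists_mem_eq_sup' hK
      (fun k => lam k + sumEntries ((Pm k).hadamard Δ))
    rw [hk] at hsup
    rw [hval Δ hΔ k] at hsup
    have hfk : 0 < frobNorm (S.hadamard (Pm k)) := frobNorm_pos (hin k hkK)
    have hle : -lam k ≤ frobNorm (S.hadamard (Pm k)) * frobNorm Δ := by
      have := ip_le (S.hadamard (Pm k)) Δ
      linarith
    have hFk : F k ≤ frobNorm Δ := by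
      rw [hF, div_le_iff₀ hfk]
      linarith [hle, mul_comm (frobNorm (S.hadamard (Pm k))) (frobNorm Δ)]
    exact le_trans (Finset.inf'_le F hkK) hFk
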